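/- arXiv:2410.12387 — 10 statements merged into one kernel-verified Lean document; each statement's English description precedes it below -/
import Mathlib

section
/- Let X be a subset of an abelian group H, and let H1 and H2 be two subgroups of H. If X − X ⊆ H1 ∪ H2, then X − X ⊆ H1 or X − X ⊆ H2. -/
theorem stmt_0 {H : Type*} [AddCommGroup H] (X : Set H) (H1 H2 : AddSubgroup H)
    (h : ∀ x ∈ X, ∀ y ∈ X, x - y ∈ (H1 : Set H) ∪ (H2 : Set H)) :
    (∀ x ∈ X, ∀ y ∈ X, x - y ∈ H1) ∨ (∀ x ∈ X, ∀ y ∈ X, x - y ∈ H2) := by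
  by_contra hc
  push_neg at hc
  obtain ⟨⟨x, hx, y, hy, hxy⟩, ⟨u, hu, v, hv, huv⟩⟩ := hc
  have hs : x - y ∈ H2 := (h x hx y hy).resolve_left hxy
  have ht : u - v ∈ H1 := (h u hu v hv).resolve_right huv
  -- show y - v ∈ H1 ∩ H2
  have hd : y - v ∈ H1 ∧ y - v ∈ H2 := by
    rcases h y hy v hv with h1 | h2
    · refine ⟨h1, ?_⟩
      have hxv : x - v ∈ H2 := by
        rcases h x hx v hv with hxv1 | hxv2
        · exfalso
          apply hxy
          have e : x - y = (x - v) - (y - v) := by abel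
          rw [e]; exact sub_mem hxv1 h1
        · exact hxv2
      have : y - v = (x - v) - (x - y) := by abel
      rw [this]; exact sub_mem hxv hs
    · refine ⟨?_, h2⟩
      have huy : u - y ∈ H1 := by
        rcases h u hu y hy with huy1 | huy2
        · exact huy1
        · exfalso
          apply huv
          have e : u - v = (u - y) + (y - v) := by abel
          rw [e]; exact add_mem huy2 h2
      have : y - v = (u - v) - (u - y) := by abel
      rw [this]; exact sub_mem ht huy
  rcases h x hx u hu with hxu | hxu
  · apply hxy
    have : x - y = (x - u) + (u - v) - (y - v) := by abel
    rw [this]; exact sub_mem (add_mem hxu ht) hd.1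
  · apply huv
    have : u - v = (x - y) - (x - u) + (y - v) := by abel
    rw [this]; exact add_mem (sub_mem hs hxu) hd.2
end

section
/- If Λ ⊂ ℝ^d is a set such that the exponentials {e^{2πi⟨λ,x⟩} : λ ∈ Λ} are pairwise orthogonal in L²([−1/2,1/2]^d), then the translates {Q + λ : λ ∈ Λ} of the unit cube Q form a packing, i.e., distinct translates intersect in a set of measure zero. -/
/-!
The integrand `e_l · conj e_m` is the product over coordinates of `t ↦ exp (2πi (lᵢ - mᵢ) t)`,
so by Fubini the inner product is the product of one-dimensional integrals over `[-1/2, 1/2]`.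
If it vanishes, some factor vanishes, which forces `lᵢ - mᵢ` to be a nonzero integer. Then the
`i`-th coordinate projections of the two translated cubes overlap in at most one point, so the
cubes meet in a null set.
-/

open MeasureTheory Real Set Complex

lemma setIntegral_univ_pi_prod_eq_prod {ι 𝕜 : Type*} [Fintype ι] [RCLike 𝕜] {E : ι → Type*}
    {mE : ∀ i, MeasurableSpace (E i)} (μ : (i : ι) → Measure (E i)) [∀ i, SigmaFinite (μ i)]
    (s : (i : ι) → Set (E i)) (f : (i : ι) → E i → 𝕜) :
    ∫ x in univ.pi s, ∏ i, f i (x i) ∂Measure.pi μ = ∏ i, ∫ t in s i, f i t ∂μ i := by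
  rw [Measure.restrict_pi_pi, integral_fintype_prod_eq_prod]

lemma cexp_sum_mul_conj_cexp_sum {ι : Type*} [Fintype ι] (l m x : ι → ℝ) :
    cexp (2 * π * I * ↑(∑ i, l i * x i)) * starRingEnd ℂ (cexp (2 * π * I * ↑(∑ i, m i * x i)))
      = ∏ i, cexp (2 * π * I * ↑((l i - m i) * x i)) := by
  rw [← Complex.exp_conj, ← Complex.exp_add, ← Complex.exp_sum]
  congr 1
  simp only [map_mul, map_sum, conj_ofReal, conj_I, map_ofNat, ofReal_sum, ofReal_mul, ofReal_sub,
    Finset.mul_sum, ← Finset.sum_add_distrib]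
  exact Finset.sum_congr rfl fun _ _ => by ring

lemma cexp_mul_sub_eq_one_of_intervalIntegral_eq_zero {c : ℂ} {a b : ℝ} (hc : c ≠ 0)
    (h : ∫ t in a..b, cexp (c * t) = 0) : cexp (c * (b - a)) = 1 := by
  rw [integral_exp_mul_complex hc, div_eq_zero_iff, or_iff_left hc, sub_eq_zero] at h
  rw [mul_sub, Complex.exp_sub, h, div_self (Complex.exp_ne_zero _)]

lemma exists_int_eq_of_cexp_two_pi_I_mul_eq_one {a : ℝ} (h : cexp (2 * π * I * a) = 1) :
    ∃ n : ℤ, a = n := by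
  obtain ⟨n, hn⟩ := exp_eq_one_iff.1 h
  exact ⟨n, by exact_mod_cast mul_left_cancel₀ two_pi_I_ne_zero (hn.trans (mul_comm _ _))⟩

lemma one_le_abs_of_integral_cexp_eq_zero {a : ℝ}
    (h : ∫ t in Icc (-(1:ℝ)/2) (1/2), cexp (2 * π * I * ↑(a * t)) = 0) : 1 ≤ |a| := by
  have ha : a ≠ 0 := by
    rintro rfl
    norm_num [Real.volume_Icc] at h
  rw [integral_Icc_eq_integral_Ioc, ← intervalIntegral.integral_of_le (by norm_num)] at h
  simp_rw [ofReal_mul, ← mul_assoc] at h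
  have hexp := cexp_mul_sub_eq_one_of_intervalIntegral_eq_zero (by simpa using ha) h
  norm_num at hexp
  obtain ⟨n, rfl⟩ := exists_int_eq_of_cexp_two_pi_I_mul_eq_one hexp
  exact_mod_cast Int.one_le_abs (by exact_mod_cast ha)

lemma exists_one_le_abs_sub_of_integral_cexp_mul_conj_eq_zero {ι : Type*} [Fintype ι] {l m : ι → ℝ}
    (h : ∫ x in univ.pi fun _ : ι => Icc (-(1:ℝ)/2) (1/2),
      cexp (2 * π * I * ↑(∑ i, l i * x i)) * starRingEnd ℂ (cexp (2 * π * I * ↑(∑ i, m i * x i)))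
        = 0) :
    ∃ i, 1 ≤ |l i - m i| := by
  simp_rw [cexp_sum_mul_conj_cexp_sum] at h
  rw [volume_pi, setIntegral_univ_pi_prod_eq_prod _ _
    fun i t => cexp (2 * π * I * ↑((l i - m i) * t))] at h
  obtain ⟨i, -, hi⟩ := Finset.prod_eq_zero_iff.1 h
  exact ⟨i, one_le_abs_of_integral_cexp_eq_zero hi⟩

lemma volume_Icc_translate_inter_eq_zero {a b : ℝ} (h : 1 ≤ |a - b|) :
    volume ((· + a) '' Icc (-(1:ℝ)/2) (1/2) ∩ (· + b) '' Icc (-(1:ℝ)/2) (1/2)) = 0 := by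
  rw [image_add_const_Icc, image_add_const_Icc, Icc_inter_Icc, Real.volume_Icc,
    ENNReal.ofReal_eq_zero, sub_nonpos]
  rcases le_abs'.1 h with h | h
  · exact (min_le_left _ _).trans ((by linarith : 1/2 + a ≤ -1/2 + b).trans (le_max_right _ _))
  · exact (min_le_right _ _).trans ((by linarith : 1/2 + b ≤ -1/2 + a).trans (le_max_left _ _))

lemma volume_cube_translate_inter_eq_zero {ι : Type*} [Fintype ι] {l m : ι → ℝ} (i : ι)
    (h : 1 ≤ |l i - m i|) :
    volume ((· + l) '' univ.pi (fun _ => Icc (-(1:ℝ)/2) (1/2)) ∩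
      (· + m) '' univ.pi (fun _ => Icc (-(1:ℝ)/2) (1/2))) = 0 := by
  refine measure_mono_null ?_
    (Measure.pi_eval_preimage_null (fun _ => volume) (i := i) (volume_Icc_translate_inter_eq_zero h))
  rintro _ ⟨⟨y, hy, rfl⟩, ⟨z, hz, hzy⟩⟩
  exact ⟨⟨y i, hy i trivial, rfl⟩, ⟨z i, hz i trivial, by simpa using congrFun hzy i⟩⟩

/-- If the exponentials with frequencies in `Λ` are pairwise orthogonal in
`L²([-1/2,1/2]^d)`, then the translates of the unit cube by `Λ` form a packing. -/
theorem stmt_3 {d : ℕ} (Λ : Set (Fin d → ℝ))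
    (horth : ∀ l ∈ Λ, ∀ m ∈ Λ, l ≠ m →
      (∫ x in Set.univ.pi fun _ : Fin d => Set.Icc (-(1:ℝ)/2) (1/2),
        Complex.exp (2 * π * Complex.I * (∑ i, l i * x i)) *
          (starRingEnd ℂ) (Complex.exp (2 * π * Complex.I * (∑ i, m i * x i)))) = 0) :
    ∀ l ∈ Λ, ∀ m ∈ Λ, l ≠ m →
      volume (((fun x => x + l) '' (Set.univ.pi fun _ : Fin d => Set.Icc (-(1:ℝ)/2) (1/2))) ∩
        ((fun x => x + m) '' (Set.univ.pi fun _ : Fin d => Set.Icc (-(1:ℝ)/2) (1/2)))) = 0 := by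
  intro l hl m hm hlm
  obtain ⟨i, hi⟩ := exists_one_le_abs_sub_of_integral_cexp_mul_conj_eq_zero (horth l hl m hm hlm)
  exact volume_cube_translate_inter_eq_zero i hi
end

section
/- If Λ ⊂ ℝ² is an orthogonal set for the unit square [−1/2,1/2]², then Λ − Λ ⊆ ℤ × ℝ or Λ − Λ ⊆ ℝ × ℤ. -/
/-- An orthogonal set for the unit square: distinct elements differ by a
nonzero integer in some coordinate. -/
def IsOrthoSq (Λ : Set (ℝ × ℝ)) : Prop :=
  ∀ l ∈ Λ, ∀ m ∈ Λ, l ≠ m →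
    (∃ k : ℤ, k ≠ 0 ∧ l.1 - m.1 = (k : ℝ)) ∨ (∃ k : ℤ, k ≠ 0 ∧ l.2 - m.2 = (k : ℝ))

private lemma r_symm {a b : ℝ} (h : ∃ k : ℤ, a - b = (k : ℝ)) : ∃ k : ℤ, b - a = (k : ℝ) := by
  obtain ⟨k, hk⟩ := h
  exact ⟨-k, by push_cast; linarith⟩

private lemma r_trans {a b c : ℝ} (h1 : ∃ k : ℤ, a - b = (k : ℝ))
    (h2 : ∃ k : ℤ, b - c = (k : ℝ)) : ∃ k : ℤ, a - c = (k : ℝ) := by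
  obtain ⟨k, hk⟩ := h1
  obtain ⟨j, hj⟩ := h2
  exact ⟨k + j, by push_cast; linarith⟩

theorem stmt_6 (Λ : Set (ℝ × ℝ)) (horth : IsOrthoSq Λ) :
    (∀ l ∈ Λ, ∀ m ∈ Λ, ∃ k : ℤ, l.1 - m.1 = (k : ℝ)) ∨
      (∀ l ∈ Λ, ∀ m ∈ Λ, ∃ k : ℤ, l.2 - m.2 = (k : ℝ)) := by
  -- weak orthogonality: for any two (possibly equal) points, some coordinate difference is ℤ
  have weak : ∀ p ∈ Λ, ∀ q ∈ Λ,
      (∃ k : ℤ, p.1 - q.1 = (k : ℝ)) ∨ (∃ k : ℤ, p.2 - q.2 = (k : ℝ)) := by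
    intro p hp q hq
    by_cases hpq : p = q
    · exact Or.inl ⟨0, by simp [hpq]⟩
    · rcases horth p hp q hq hpq with ⟨k, _, hk⟩ | ⟨k, _, hk⟩
      · exact Or.inl ⟨k, hk⟩
      · exact Or.inr ⟨k, hk⟩
  by_contra hcon
  push_neg at hcon
  obtain ⟨⟨x, hx, y, hy, hxy'⟩, ⟨a, ha, b, hb, hab'⟩⟩ := hcon
  have hxy : ¬∃ k : ℤ, x.1 - y.1 = (k : ℝ) := by push_neg; exact hxy'
  have hab : ¬∃ k : ℤ, a.2 - b.2 = (k : ℝ) := by push_neg; exact hab'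
  -- x.1 ≢ y.1, so x.2 ≡ y.2 ; a.2 ≢ b.2 so a.1 ≡ b.1
  have hxy2 : ∃ k : ℤ, x.2 - y.2 = (k : ℝ) := (weak x hx y hy).resolve_left hxy
  have hab1 : ∃ k : ℤ, a.1 - b.1 = (k : ℝ) := (weak a ha b hb).resolve_right hab
  by_cases hxa : ∃ k : ℤ, x.1 - a.1 = (k : ℝ)
  · -- then y.1 ≢ a.1 and y.1 ≢ b.1, so y.2 ≡ a.2 and y.2 ≡ b.2, contradicting a.2 ≢ b.2
    have hya : ¬∃ k : ℤ, y.1 - a.1 = (k : ℝ) := fun h => hxy (r_trans hxa (r_symm h))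
    have hyb : ¬∃ k : ℤ, y.1 - b.1 = (k : ℝ) := fun h => hya (r_trans h (r_symm hab1))
    have h1 := (weak y hy a ha).resolve_left hya
    have h2 := (weak y hy b hb).resolve_left hyb
    exact hab (r_trans (r_symm h1) h2)
  · -- x.2 ≡ a.2, so y.2 ≡ a.2 ≢ b.2, so y.1 ≡ b.1 ≡ a.1; also x.2 ≢ b.2 so x.1 ≡ b.1 ≡ a.1
    have hxa2 : ∃ k : ℤ, x.2 - a.2 = (k : ℝ) := (weak x hx a ha).resolve_left hxa
    have hxb2 : ¬∃ k : ℤ, x.2 - b.2 = (k : ℝ) := fun h => hab (r_trans (r_symm hxa2) h)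
    have hxb1 : ∃ k : ℤ, x.1 - b.1 = (k : ℝ) := (weak x hx b hb).resolve_right hxb2
    exact hxa (r_trans hxb1 (r_symm hab1))
end

section
/- Any orthogonal set Λ for the unit square [−1/2,1/2]² in ℝ² can be embedded as a subset of a spectrum of the unit square; in particular, any maximal orthogonal set for the unit square is a spectrum. -/
open MeasureTheory Real

/-- The unit square `[-1/2,1/2]²`. -/
noncomputable def Qsq : Set (ℝ × ℝ) :=
  Set.Icc (-(1:ℝ)/2) (1/2) ×ˢ Set.Icc (-(1:ℝ)/2) (1/2)

/-- `Γ` is a spectrum of the unit square: the exponentials `e^{2πi⟨γ,x⟩}`, `γ ∈ Γ`,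
form an orthogonal and complete system in `L²(Qsq)`. -/
def IsSpectrumSq (Γ : Set (ℝ × ℝ)) : Prop :=
  IsOrthoSq Γ ∧
    ∀ f : ℝ × ℝ → ℂ, MemLp f 2 (volume.restrict Qsq) →
      (∀ l ∈ Γ, (∫ x in Qsq,
        f x * Complex.exp (-(2 * π * Complex.I) * (l.1 * x.1 + l.2 * x.2))) = 0) →
      f =ᵐ[volume.restrict Qsq] 0

/-!
For an orthogonal set, congruence mod 1 of first coordinates and congruence mod 1 of second
coordinates are two equivalence relations whose union is total, so one of them is total. Up to
swapping the axes, all second coordinates then lie in one coset `t + ℤ`, and points with the same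
second coordinate `t + k` have first coordinates in one coset `s k + ℤ`; so `Λ` lies in
`{(s k + n, t + k)}`. This set is a spectrum: if `f` is orthogonal to all its exponentials, then
for each `k` the partial Fourier transform `x ↦ ∫ f(x, y) e^{-2πi(t+k)y} dy` has all Fourier
coefficients along `s k + ℤ` equal to zero, so it vanishes by Parseval; hence almost every row
`f(x, ·)` has all Fourier coefficients along `t + ℤ` equal to zero and vanishes as well.
A maximal orthogonal set equals any spectrum containing it.
-/

open Set

lemma ae_eq_zero_of_fourierCoeffOn_eq_zero {a b : ℝ} (hab : a < b) {f : ℝ → ℂ}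
    (hf : MemLp f 2 (volume.restrict (Ioc a b))) (h : ∀ n, fourierCoeffOn hab f n = 0) :
    f =ᵐ[volume.restrict (Ioc a b)] 0 := by
  have hparseval := hasSum_sq_fourierCoeffOn hab hf
  simp only [h, norm_zero, ne_eq, OfNat.ofNat_ne_zero, not_false_eq_true, zero_pow] at hparseval
  have hnorm : ∫ x in Ioc a b, ‖f x‖ ^ 2 = 0 := by
    have hsum := hasSum_zero.unique hparseval
    rw [intervalIntegral.integral_of_le hab.le] at hsum
    simpa [(sub_pos.2 hab).ne'] using hsum.symm
  have hnorm_ae := (integral_eq_zero_iff_of_nonneg (fun x => by positivity)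
    (hf.integrable_norm_pow two_ne_zero)).1 hnorm
  filter_upwards [hnorm_ae] with x hx
  simpa using hx

lemma MeasureTheory.MemLp.mul_of_norm_eq_one {α : Type*} [MeasurableSpace α] {μ : Measure α}
    {p : ENNReal} {f u : α → ℂ} (hf : MemLp f p μ) (hu : AEStronglyMeasurable u μ)
    (hu_norm : ∀ x, ‖u x‖ = 1) : MemLp (fun x => f x * u x) p μ :=
  (memLp_congr_norm (hf.aestronglyMeasurable.mul hu) hf.aestronglyMeasurable
    (ae_of_all _ fun x => by simp [hu_norm])).2 hf

def IsCompleteExponentials (μ : Measure ℝ) {ι : Type*} (ξ : ι → ℝ) : Prop :=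
  ∀ g : ℝ → ℂ, MemLp g 2 μ →
    (∀ i, ∫ x, g x * Complex.exp (-(2 * π * Complex.I) * (ξ i * x)) ∂μ = 0) → g =ᵐ[μ] 0

theorem isCompleteExponentials_Ioc {a b : ℝ} (hab : b - a = 1) (c : ℝ) :
    IsCompleteExponentials (volume.restrict (Ioc a b)) (fun n : ℤ => c + n) := by
  intro f hf h
  have hlt : a < b := by linarith
  set g := fun x => f x * Complex.exp (-(2 * π * Complex.I) * (c * x))
  have hg : MemLp g 2 (volume.restrict (Ioc a b)) :=
    hf.mul_of_norm_eq_one (by fun_prop) fun x => by simp [Complex.norm_exp]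
  have hcoeff : ∀ n, fourierCoeffOn hlt g n = 0 := by
    intro n
    rw [fourierCoeffOn_eq_integral, intervalIntegral.integral_of_le hlt.le, ← h n]
    simp only [hab, Complex.ofReal_one, div_one, one_smul, fourier_coe_apply, smul_eq_mul, g]
    refine integral_congr_ae (ae_of_all _ fun x => ?_)
    dsimp only
    rw [mul_left_comm, ← Complex.exp_add]
    push_cast
    ring_nf
  filter_upwards [ae_eq_zero_of_fourierCoeffOn_eq_zero hlt hg hcoeff] with x hx
  simpa [g, Complex.exp_ne_zero] using hx

section ProductMeasure

variable {α β E : Type*} [MeasurableSpace α] [MeasurableSpace β] {μ : Measure α} {ν : Measure β}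
  [NormedAddCommGroup E]

lemma sq_norm_integral_le_integral_sq_norm [NormedSpace ℝ E] [IsProbabilityMeasure ν]
    {g : β → E} (hg : MemLp g 2 ν) : ‖∫ y, g y ∂ν‖ ^ 2 ≤ ∫ y, ‖g y‖ ^ 2 ∂ν := by
  have hvar := ProbabilityTheory.variance_nonneg (fun y => ‖g y‖) ν
  rw [ProbabilityTheory.variance_eq_sub hg.norm, sub_nonneg] at hvar
  calc ‖∫ y, g y ∂ν‖ ^ 2 ≤ (∫ y, ‖g y‖ ∂ν) ^ 2 := by
        gcongr
        exact norm_integral_le_integral_norm g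
    _ ≤ ∫ y, ‖g y‖ ^ 2 ∂ν := by simpa only [Pi.pow_apply] using hvar

lemma MeasureTheory.MemLp.ae_memLp_prodMk [SFinite μ] [SFinite ν] {f : α × β → E}
    (hf : MemLp f 2 (μ.prod ν)) : ∀ᵐ x ∂μ, MemLp (fun y => f (x, y)) 2 ν := by
  have hsq := (memLp_two_iff_integrable_sq_norm hf.aestronglyMeasurable).1 hf
  filter_upwards [hsq.prod_right_ae, hf.aestronglyMeasurable.prodMk_left] with x hx hxm
  exact (memLp_two_iff_integrable_sq_norm hxm).2 hx

lemma MeasureTheory.MemLp.integral_prod_left [NormedSpace ℝ E] [SFinite μ]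
    [IsProbabilityMeasure ν] {f : α × β → E} (hf : MemLp f 2 (μ.prod ν)) :
    MemLp (fun x => ∫ y, f (x, y) ∂ν) 2 μ := by
  have hm := hf.aestronglyMeasurable.integral_prod_right'
  have hsq := (memLp_two_iff_integrable_sq_norm hf.aestronglyMeasurable).1 hf
  refine (memLp_two_iff_integrable_sq_norm hm).2 (hsq.integral_prod_left.mono (hm.norm.pow 2) ?_)
  filter_upwards [hf.ae_memLp_prodMk] with x hx
  rw [Real.norm_of_nonneg (by positivity), Real.norm_of_nonneg (by positivity)]
  exact sq_norm_integral_le_integral_sq_norm hx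

lemma ae_eq_zero_of_ae_ae_eq_zero [SFinite ν] {f : α × β → E}
    (hf : AEStronglyMeasurable f (μ.prod ν)) (h : ∀ᵐ x ∂μ, (fun y => f (x, y)) =ᵐ[ν] 0) :
    f =ᵐ[μ.prod ν] 0 := by
  have hmk : ∀ᵐ x ∂μ, (fun y => f (x, y)) =ᵐ[ν] fun y => hf.mk f (x, y) :=
    Measure.ae_ae_eq_curry_of_prod hf.ae_eq_mk
  refine hf.ae_eq_mk.trans ((Measure.ae_prod_iff_ae_ae ?_).2 ?_)
  · exact hf.stronglyMeasurable_mk.measurableSet_eq_fun stronglyMeasurable_const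
  · filter_upwards [h, hmk] with x h0 hx
    filter_upwards [h0, hx] with y h0y hxy
    rw [← hxy]
    exact h0y

end ProductMeasure

theorem ae_eq_zero_of_integral_prod_mul_exp_eq_zero {μ ν : Measure ℝ} [IsFiniteMeasure μ]
    [IsProbabilityMeasure ν] {s : ℤ → ℝ} {t : ℝ}
    (hμ : ∀ k, IsCompleteExponentials μ (fun n : ℤ => s k + n))
    (hν : IsCompleteExponentials ν (fun k : ℤ => t + k)) {f : ℝ × ℝ → ℂ}
    (hf : MemLp f 2 (μ.prod ν))
    (h : ∀ n k : ℤ, ∫ p, f p * Complex.exp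
      (-(2 * π * Complex.I) * ((s k + n : ℝ) * p.1 + (t + k : ℝ) * p.2)) ∂μ.prod ν = 0) :
    f =ᵐ[μ.prod ν] 0 := by
  set F : ℤ → ℝ → ℂ := fun k x =>
    ∫ y, f (x, y) * Complex.exp (-(2 * π * Complex.I) * ((t + k : ℝ) * y)) ∂ν
  have hF_memLp : ∀ k, MemLp (F k) 2 μ := by
    intro k
    have hrow_memLp := hf.mul_of_norm_eq_one
      (u := fun p => Complex.exp (-(2 * π * Complex.I) * ((t + k : ℝ) * p.2)))
      (by fun_prop) fun p => by simp [Complex.norm_exp]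
    exact hrow_memLp.integral_prod_left
  have hF_integral : ∀ k n : ℤ,
      ∫ x, F k x * Complex.exp (-(2 * π * Complex.I) * ((s k + n : ℝ) * x)) ∂μ = 0 := by
    intro k n
    have hint : Integrable (fun p : ℝ × ℝ => f p * Complex.exp
        (-(2 * π * Complex.I) * ((s k + n : ℝ) * p.1 + (t + k : ℝ) * p.2))) (μ.prod ν) :=
      (hf.mul_of_norm_eq_one (by fun_prop) fun p => by simp [Complex.norm_exp]).integrable
        one_le_two
    rw [← h n k, integral_prod _ hint]
    refine integral_congr_ae (ae_of_all _ fun x => ?_)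
    simp only [F, ← integral_mul_const]
    refine integral_congr_ae (ae_of_all _ fun y => ?_)
    simp only [mul_add, Complex.exp_add]
    ring
  have hF : ∀ᵐ x ∂μ, ∀ k, F k x = 0 :=
    ae_all_iff.2 fun k => hμ k (F k) (hF_memLp k) (hF_integral k)
  refine ae_eq_zero_of_ae_ae_eq_zero hf.aestronglyMeasurable ?_
  filter_upwards [hF, hf.ae_memLp_prodMk] with x hFx hx
  exact hν _ hx hFx

lemma Set.forall_rel_or_forall_rel {X : Type*} {S : Set X} {r₁ r₂ : X → X → Prop}
    (symm₁ : Std.Symm r₁) (trans₁ : IsTrans X r₁) (symm₂ : Std.Symm r₂)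
    (trans₂ : IsTrans X r₂) (h : ∀ x ∈ S, ∀ y ∈ S, r₁ x y ∨ r₂ x y) :
    (∀ x ∈ S, ∀ y ∈ S, r₁ x y) ∨ ∀ x ∈ S, ∀ y ∈ S, r₂ x y := by
  refine or_iff_not_imp_left.2 fun h₁ => ?_
  push Not at h₁
  obtain ⟨a, ha, b, hb, hab⟩ := h₁
  have hab₂ : r₂ a b := (h a ha b hb).resolve_left hab
  have h₂a : ∀ x ∈ S, r₂ x a := by
    intro x hx
    by_cases hxa : r₁ x a
    · have hxb : ¬ r₁ x b := fun hxb => hab (trans₁.trans _ _ _ (symm₁.symm _ _ hxa) hxb)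
      exact trans₂.trans _ _ _ ((h x hx b hb).resolve_left hxb) (symm₂.symm _ _ hab₂)
    · exact (h x hx a ha).resolve_left hxa
  exact fun x hx y hy => trans₂.trans _ _ _ (h₂a x hx) (symm₂.symm _ _ (h₂a y hy))

lemma modEq_one_of_sub_eq_intCast {x y : ℝ} {k : ℤ} (h : x - y = k) : y ≡ x [PMOD 1] :=
  AddCommGroup.modEq_iff_zsmul'.2 ⟨k, by simpa using h⟩

namespace IsOrthoSq

variable {Λ : Set (ℝ × ℝ)}

lemma mono {Γ : Set (ℝ × ℝ)} (h : IsOrthoSq Γ) (hΛ : Λ ⊆ Γ) : IsOrthoSq Λ :=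
  fun l hl m hm hne => h l (hΛ hl) m (hΛ hm) hne

lemma image_swap (h : IsOrthoSq Λ) : IsOrthoSq (Prod.swap '' Λ) := by
  rintro _ ⟨l, hl, rfl⟩ _ ⟨m, hm, rfl⟩ hne
  exact (h l hl m hm (ne_of_apply_ne _ hne)).symm

lemma modEq_or_modEq (h : IsOrthoSq Λ) {l m : ℝ × ℝ} (hl : l ∈ Λ) (hm : m ∈ Λ) :
    m.1 ≡ l.1 [PMOD 1] ∨ m.2 ≡ l.2 [PMOD 1] := by
  rcases eq_or_ne l m with rfl | hne
  · exact Or.inl AddCommGroup.modEq_rfl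
  · exact (h l hl m hm hne).imp (fun ⟨k, _, hk⟩ => modEq_one_of_sub_eq_intCast hk)
      fun ⟨k, _, hk⟩ => modEq_one_of_sub_eq_intCast hk

lemma modEq_fst_of_snd_eq (h : IsOrthoSq Λ) {l m : ℝ × ℝ} (hl : l ∈ Λ) (hm : m ∈ Λ)
    (h₂ : l.2 = m.2) : m.1 ≡ l.1 [PMOD 1] := by
  rcases eq_or_ne l m with rfl | hne
  · exact AddCommGroup.modEq_rfl
  rcases h l hl m hm hne with ⟨k, -, hk⟩ | ⟨k, hk₀, hk⟩
  · exact modEq_one_of_sub_eq_intCast hk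
  · exact absurd (by exact_mod_cast (sub_eq_zero.2 h₂).symm.trans hk) hk₀.symm

end IsOrthoSq

lemma volume_restrict_Qsq :
    volume.restrict Qsq = (volume.restrict (Ioc (-(1:ℝ)/2) (1/2))).prod
      (volume.restrict (Ioc (-(1:ℝ)/2) (1/2))) := by
  rw [Qsq, Measure.volume_eq_prod, ← Measure.prod_restrict, restrict_Ioc_eq_restrict_Icc]

lemma IsSpectrumSq.image_swap {Γ : Set (ℝ × ℝ)} (h : IsSpectrumSq Γ) :
    IsSpectrumSq (Prod.swap '' Γ) := by
  obtain ⟨hΓ, hcomplete⟩ := h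
  refine ⟨hΓ.image_swap, fun f hf hf_int => ?_⟩
  rw [volume_restrict_Qsq] at hcomplete hf hf_int ⊢
  set μ : Measure ℝ := volume.restrict (Ioc (-(1:ℝ)/2) (1/2))
  have hswap := Measure.measurePreserving_swap (μ := μ) (ν := μ)
  have h0 : f ∘ Prod.swap =ᵐ[μ.prod μ] 0 := by
    refine hcomplete _ (hf.comp_measurePreserving hswap) fun l hl => ?_
    rw [← hf_int l.swap ⟨l, hl, rfl⟩]
    conv_rhs => rw [← integral_prod_swap]
    simp only [Function.comp_apply, Prod.fst_swap, Prod.snd_swap]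
    ring_nf
  simpa [Function.comp_assoc] using hswap.quasiMeasurePreserving.ae_eq_comp h0

def rowShiftedLattice (s : ℤ → ℝ) (t : ℝ) : Set (ℝ × ℝ) :=
  {p | ∃ n k : ℤ, p = (s k + n, t + k)}

lemma isOrthoSq_rowShiftedLattice (s : ℤ → ℝ) (t : ℝ) : IsOrthoSq (rowShiftedLattice s t) := by
  rintro _ ⟨n, k, rfl⟩ _ ⟨n', k', rfl⟩ hne
  by_cases hk : k = k'
  · subst hk
    exact Or.inl ⟨n - n', sub_ne_zero.2 fun hn => hne (by rw [hn]), by push_cast; ring⟩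
  · exact Or.inr ⟨k - k', sub_ne_zero.2 hk, by push_cast; ring⟩

theorem isSpectrumSq_rowShiftedLattice (s : ℤ → ℝ) (t : ℝ) :
    IsSpectrumSq (rowShiftedLattice s t) := by
  refine ⟨isOrthoSq_rowShiftedLattice s t, fun f hf hf_int => ?_⟩
  have : IsProbabilityMeasure (volume.restrict (Ioc (-(1:ℝ)/2) (1/2))) :=
    ⟨by rw [Measure.restrict_apply_univ, Real.volume_Ioc]; norm_num⟩
  have hunit : 1/2 - (-(1:ℝ)/2) = 1 := by norm_num
  rw [volume_restrict_Qsq] at hf hf_int ⊢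
  exact ae_eq_zero_of_integral_prod_mul_exp_eq_zero
    (fun k => isCompleteExponentials_Ioc hunit (s k)) (isCompleteExponentials_Ioc hunit t) hf
    fun n k => hf_int (s k + n, t + k) ⟨n, k, rfl⟩

lemma IsOrthoSq.exists_subset_rowShiftedLattice {Λ : Set (ℝ × ℝ)} (h : IsOrthoSq Λ)
    (hsnd : ∀ l ∈ Λ, ∀ m ∈ Λ, l.2 ≡ m.2 [PMOD 1]) : ∃ s t, Λ ⊆ rowShiftedLattice s t := by
  rcases Λ.eq_empty_or_nonempty with rfl | ⟨l₀, hl₀⟩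
  · exact ⟨0, 0, empty_subset _⟩
  have hrow : ∀ k : ℤ, ∃ x : ℝ, ∀ l ∈ Λ, l.2 = l₀.2 + k → x ≡ l.1 [PMOD 1] := by
    intro k
    by_cases hk : ∃ m ∈ Λ, m.2 = l₀.2 + k
    · obtain ⟨m, hm, hmk⟩ := hk
      exact ⟨m.1, fun l hl hlk => h.modEq_fst_of_snd_eq hl hm (hlk.trans hmk.symm)⟩
    · exact ⟨0, fun l hl hlk => absurd ⟨l, hl, hlk⟩ hk⟩
  choose s hs using hrow
  refine ⟨s, l₀.2, fun l hl => ?_⟩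
  obtain ⟨k, hk⟩ := AddCommGroup.modEq_iff_eq_add_zsmul.1 (hsnd l₀ hl₀ l hl)
  obtain ⟨n, hn⟩ := AddCommGroup.modEq_iff_eq_add_zsmul.1 (hs k l hl (by simpa using hk))
  exact ⟨n, k, Prod.ext (by simpa using hn) (by simpa using hk)⟩

theorem IsOrthoSq.exists_isSpectrumSq_superset {Λ : Set (ℝ × ℝ)} (h : IsOrthoSq Λ) :
    ∃ Γ, Λ ⊆ Γ ∧ IsSpectrumSq Γ := by
  rcases Set.forall_rel_or_forall_rel (S := Λ) (r₁ := fun l m => l.1 ≡ m.1 [PMOD 1])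
    (r₂ := fun l m => l.2 ≡ m.2 [PMOD 1]) ⟨fun _ _ => .symm⟩ ⟨fun _ _ _ => .trans⟩
    ⟨fun _ _ => .symm⟩ ⟨fun _ _ _ => .trans⟩ (fun l hl m hm => h.modEq_or_modEq hm hl)
    with hfst | hsnd
  · obtain ⟨s, t, hst⟩ := h.image_swap.exists_subset_rowShiftedLattice <| by
      rintro _ ⟨l, hl, rfl⟩ _ ⟨m, hm, rfl⟩
      exact hfst l hl m hm
    exact ⟨Prod.swap '' rowShiftedLattice s t, fun l hl => ⟨l.swap, hst ⟨l, hl, rfl⟩, l.swap_swap⟩,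
      (isSpectrumSq_rowShiftedLattice s t).image_swap⟩
  · obtain ⟨s, t, hst⟩ := h.exists_subset_rowShiftedLattice hsnd
    exact ⟨_, hst, isSpectrumSq_rowShiftedLattice s t⟩

/-- Any orthogonal set for the unit square embeds in a spectrum; in particular
any maximal orthogonal set is a spectrum. -/
theorem stmt_7 (Λ : Set (ℝ × ℝ)) (horth : IsOrthoSq Λ) :
    (∃ Γ : Set (ℝ × ℝ), Λ ⊆ Γ ∧ IsSpectrumSq Γ) ∧
      ((∀ s ∉ Λ, ¬ IsOrthoSq (insert s Λ)) → IsSpectrumSq Λ) := by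
  refine ⟨horth.exists_isSpectrumSq_superset, fun hmax => ?_⟩
  obtain ⟨Γ, hΛΓ, hΓ⟩ := horth.exists_isSpectrumSq_superset
  have hΓΛ : Γ ⊆ Λ := fun γ hγ => by_contra fun hγΛ =>
    hmax γ hγΛ (hΓ.1.mono (Set.insert_subset hγ hΛΓ))
  rwa [hΛΓ.antisymm hΓΛ]
end

section
/- Let B ⊂ ℝ³ be the set of vectors with all three coordinates nonzero integers, and G = {ξ ∈ ℝ³ : some coordinate of ξ is in ℤ \ {0}}. If s ∈ ℝ³ satisfies s − B ⊆ G, then at least one coordinate of s is zero. -/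
/-- `G`: points of `ℝ³` with at least one coordinate a nonzero integer. -/
def Gset : Set (ℝ × ℝ × ℝ) :=
  {ξ | (∃ k : ℤ, k ≠ 0 ∧ ξ.1 = (k : ℝ)) ∨ (∃ k : ℤ, k ≠ 0 ∧ ξ.2.1 = (k : ℝ)) ∨
    (∃ k : ℤ, k ≠ 0 ∧ ξ.2.2 = (k : ℝ))}

/-- `B = (ℤ \ {0})³`: vectors with all three coordinates nonzero integers. -/
def Bset : Set (ℝ × ℝ × ℝ) :=
  {x | (∃ k : ℤ, k ≠ 0 ∧ x.1 = (k : ℝ)) ∧ (∃ k : ℤ, k ≠ 0 ∧ x.2.1 = (k : ℝ)) ∧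
    (∃ k : ℤ, k ≠ 0 ∧ x.2.2 = (k : ℝ))}

lemma aux_pick (x : ℝ) (hx : x ≠ 0) :
    ∃ k : ℤ, k ≠ 0 ∧ ¬ (∃ m : ℤ, m ≠ 0 ∧ x - (k : ℝ) = (m : ℝ)) := by
  by_cases h : ∃ m : ℤ, x = (m : ℝ)
  · obtain ⟨m, hm⟩ := h
    have hm0 : m ≠ 0 := by
      rintro rfl; simp at hm; exact hx hm
    refine ⟨m, hm0, ?_⟩
    rintro ⟨m', hm', heq⟩
    rw [hm, sub_self] at heq
    exact hm' (by exact_mod_cast heq.symm)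
  · refine ⟨1, one_ne_zero, ?_⟩
    rintro ⟨m', _, heq⟩
    push_cast at heq
    exact h ⟨m' + 1, by push_cast; linarith⟩

theorem stmt_9 (s : ℝ × ℝ × ℝ) (h : ∀ b ∈ Bset, s - b ∈ Gset) :
    s.1 = 0 ∨ s.2.1 = 0 ∨ s.2.2 = 0 := by
  by_contra hc
  push_neg at hc
  obtain ⟨h1, h2, h3⟩ := hc
  obtain ⟨k1, hk1, hn1⟩ := aux_pick s.1 h1
  obtain ⟨k2, hk2, hn2⟩ := aux_pick s.2.1 h2
  obtain ⟨k3, hk3, hn3⟩ := aux_pick s.2.2 h3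
  have hb : ((k1 : ℝ), (k2 : ℝ), (k3 : ℝ)) ∈ Bset :=
    ⟨⟨k1, hk1, rfl⟩, ⟨k2, hk2, rfl⟩, ⟨k3, hk3, rfl⟩⟩
  have := h _ hb
  simp only [Gset, Set.mem_setOf_eq, Prod.fst_sub, Prod.snd_sub] at this
  rcases this with h' | h' | h'
  · exact hn1 h'
  · exact hn2 h'
  · exact hn3 h'
end

section
/- Fix α, β, γ ∈ ℝ \ ℤ. The set Λ = A ∪ B, where A consists of the points (0, β−k, γ), (α, 0, γ−k), (α−k, β, 0) for k ∈ ℤ \ {0} and B = (ℤ \ {0})³, is a maximal orthogonal set for the unit cube in ℝ³: there is no s ∈ ℝ³ \ Λ with s − Λ ⊆ G, where G = {ξ ∈ ℝ³ : some coordinate in ℤ \ {0}}. -/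
/-- If `a` is not an integer cast, it is not a nonzero integer cast. -/
lemma aux_notint {a : ℝ} (h : ∀ k : ℤ, a ≠ k) : ¬ ∃ k : ℤ, k ≠ 0 ∧ a = k := by
  rintro ⟨k, -, hk⟩; exact h k hk

lemma aux_zero : ¬ ∃ k : ℤ, k ≠ 0 ∧ (0 : ℝ) = k := by
  rintro ⟨k, hk, h⟩; exact hk (by exact_mod_cast h.symm)

/-- Shifting a non-integer by an integer stays a non-integer. -/
lemma aux_shift {a x : ℝ} (h : ∀ k : ℤ, a ≠ k) (p : ℤ) (hx : x = a + p) :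
    ∀ k : ℤ, x ≠ k := by
  intro k hk
  exact h (k - p) (by push_cast; linarith)

lemma aux_notG {a b c : ℝ} (ha : ¬ ∃ k : ℤ, k ≠ 0 ∧ a = k)
    (hb : ¬ ∃ k : ℤ, k ≠ 0 ∧ b = k) (hc : ¬ ∃ k : ℤ, k ≠ 0 ∧ c = k) :
    (a, b, c) ∉ Gset := by
  simp only [Gset, Set.mem_setOf_eq]
  rintro (h | h | h)
  exacts [ha h, hb h, hc h]

/-- If `c + k` is a nonzero integer for every nonzero integer `k`, then `c = 0`. -/
lemma aux_key {c : ℝ} (H : ∀ k : ℤ, k ≠ 0 → ∃ m : ℤ, m ≠ 0 ∧ c + (k : ℝ) = m) :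
    c = 0 := by
  obtain ⟨m, hm, h1⟩ := H 1 one_ne_zero
  push_cast at h1
  have hc : c = ((m - 1 : ℤ) : ℝ) := by push_cast; linarith
  by_contra hc0
  have hm1 : m - 1 ≠ 0 := by
    intro h; apply hc0; rw [hc, h]; simp
  obtain ⟨m', hm', h2⟩ := H (-(m - 1)) (neg_ne_zero.mpr hm1)
  apply hm'
  have : (m' : ℝ) = 0 := by rw [← h2, hc]; push_cast; ring
  exact_mod_cast this

theorem stmt_10 (α β γ : ℝ) (hα : ∀ k : ℤ, α ≠ k) (hβ : ∀ k : ℤ, β ≠ k)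
    (hγ : ∀ k : ℤ, γ ≠ k)
    (A : Set (ℝ × ℝ × ℝ))
    (hA : A = {x | ∃ k : ℤ, k ≠ 0 ∧
      (x = (0, β - k, γ) ∨ x = (α, 0, γ - k) ∨ x = (α - k, β, 0))})
    (B : Set (ℝ × ℝ × ℝ))
    (hB : B = {x | (∃ k : ℤ, k ≠ 0 ∧ x.1 = (k : ℝ)) ∧ (∃ k : ℤ, k ≠ 0 ∧ x.2.1 = (k : ℝ)) ∧
      (∃ k : ℤ, k ≠ 0 ∧ x.2.2 = (k : ℝ))}) :
    ¬ ∃ s : ℝ × ℝ × ℝ, s ∉ A ∪ B ∧ ∀ l ∈ A ∪ B, s - l ∈ Gset := by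
  rintro ⟨⟨x, y, z⟩, hs, h⟩
  -- membership helpers
  have hA1 : ∀ k : ℤ, k ≠ 0 → ((0 : ℝ), β - k, γ) ∈ A ∪ B := by
    intro k hk; left; rw [hA]; exact ⟨k, hk, Or.inl rfl⟩
  have hA2 : ∀ k : ℤ, k ≠ 0 → (α, (0 : ℝ), γ - k) ∈ A ∪ B := by
    intro k hk; left; rw [hA]; exact ⟨k, hk, Or.inr (Or.inl rfl)⟩
  have hA3 : ∀ k : ℤ, k ≠ 0 → (α - k, β, (0 : ℝ)) ∈ A ∪ B := by
    intro k hk; left; rw [hA]; exact ⟨k, hk, Or.inr (Or.inr rfl)⟩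
  have hBm : ∀ k1 k2 k3 : ℤ, k1 ≠ 0 → k2 ≠ 0 → k3 ≠ 0 →
      ((k1 : ℝ), (k2 : ℝ), (k3 : ℝ)) ∈ A ∪ B := by
    intro k1 k2 k3 h1 h2 h3; right; rw [hB]
    exact ⟨⟨k1, h1, rfl⟩, ⟨k2, h2, rfl⟩, ⟨k3, h3, rfl⟩⟩
  -- extract the three A-family conditions
  have hG1 : ∀ k : ℤ, k ≠ 0 →
      (∃ m : ℤ, m ≠ 0 ∧ x = m) ∨ (∃ m : ℤ, m ≠ 0 ∧ y - (β - k) = m) ∨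
        (∃ m : ℤ, m ≠ 0 ∧ z - γ = m) := by
    intro k hk
    have := h _ (hA1 k hk)
    simpa only [Gset, Prod.mk_sub_mk, Set.mem_setOf_eq, sub_zero] using this
  have hG2 : ∀ k : ℤ, k ≠ 0 →
      (∃ m : ℤ, m ≠ 0 ∧ x - α = m) ∨ (∃ m : ℤ, m ≠ 0 ∧ y = m) ∨
        (∃ m : ℤ, m ≠ 0 ∧ z - (γ - k) = m) := by
    intro k hk
    have := h _ (hA2 k hk)
    simpa only [Gset, Prod.mk_sub_mk, Set.mem_setOf_eq, sub_zero] using this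
  have hG3 : ∀ k : ℤ, k ≠ 0 →
      (∃ m : ℤ, m ≠ 0 ∧ x - (α - k) = m) ∨ (∃ m : ℤ, m ≠ 0 ∧ y - β = m) ∨
        (∃ m : ℤ, m ≠ 0 ∧ z = m) := by
    intro k hk
    have := h _ (hA3 k hk)
    simpa only [Gset, Prod.mk_sub_mk, Set.mem_setOf_eq, sub_zero] using this
  -- derived disjunctions
  have D1 : (∃ m : ℤ, m ≠ 0 ∧ x = m) ∨ (∃ m : ℤ, m ≠ 0 ∧ z - γ = m) ∨ y = β := by
    by_cases h1 : ∃ m : ℤ, m ≠ 0 ∧ x = m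
    · exact Or.inl h1
    by_cases h2 : ∃ m : ℤ, m ≠ 0 ∧ z - γ = m
    · exact Or.inr (Or.inl h2)
    refine Or.inr (Or.inr ?_)
    have key : y - β = 0 := by
      apply aux_key
      intro k hk
      have h3 := ((hG1 k hk).resolve_left h1).resolve_right h2
      obtain ⟨m, hm, he⟩ := h3
      exact ⟨m, hm, by linarith⟩
    linarith
  have D2 : (∃ m : ℤ, m ≠ 0 ∧ y = m) ∨ (∃ m : ℤ, m ≠ 0 ∧ x - α = m) ∨ z = γ := by
    by_cases h1 : ∃ m : ℤ, m ≠ 0 ∧ y = m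
    · exact Or.inl h1
    by_cases h2 : ∃ m : ℤ, m ≠ 0 ∧ x - α = m
    · exact Or.inr (Or.inl h2)
    refine Or.inr (Or.inr ?_)
    have key : z - γ = 0 := by
      apply aux_key
      intro k hk
      have h3 := ((hG2 k hk).resolve_left h2).resolve_left h1
      obtain ⟨m, hm, he⟩ := h3
      exact ⟨m, hm, by linarith⟩
    linarith
  have D3 : (∃ m : ℤ, m ≠ 0 ∧ z = m) ∨ (∃ m : ℤ, m ≠ 0 ∧ y - β = m) ∨ x = α := by
    by_cases h1 : ∃ m : ℤ, m ≠ 0 ∧ z = m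
    · exact Or.inl h1
    by_cases h2 : ∃ m : ℤ, m ≠ 0 ∧ y - β = m
    · exact Or.inr (Or.inl h2)
    refine Or.inr (Or.inr ?_)
    have key : x - α = 0 := by
      apply aux_key
      intro k hk
      have h4 : ¬((∃ m : ℤ, m ≠ 0 ∧ y - β = m) ∨ ∃ m : ℤ, m ≠ 0 ∧ z = m) := by
        rintro (h' | h')
        exacts [h2 h', h1 h']
      obtain ⟨m, hm, he⟩ := (hG3 k hk).resolve_right h4
      exact ⟨m, hm, by linarith⟩
    linarith
  -- a generic way to refute Gset membership of s - (a,b,c)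
  have hsub : ∀ a b c : ℝ, ((x, y, z) : ℝ × ℝ × ℝ) - (a, b, c) = (x - a, y - b, z - c) := by
    intro a b c; rfl
  rcases D1 with ⟨m, hm, hxm⟩ | ⟨m, hm, hzm⟩ | hyβ
  · -- x is a nonzero integer
    rcases D2 with ⟨n, hn, hyn⟩ | ⟨n, hn, hxn⟩ | hzγ
    · -- y is a nonzero integer; then D3 forces z nonzero integer, so s ∈ B : contradiction
      rcases D3 with ⟨q, hq, hzq⟩ | ⟨q, hq, hyq⟩ | hxα
      · apply hs; right; rw [hB]
        exact ⟨⟨m, hm, hxm⟩, ⟨n, hn, hyn⟩, ⟨q, hq, hzq⟩⟩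
      · exact aux_notint (aux_shift hβ q (by linarith)) ⟨n, hn, hyn⟩
      · exact hα m (by rw [← hxα, hxm])
    · -- x - α integer: impossible since x is an integer and α is not
      exact hα (m - n) (by push_cast; linarith)
    · -- z = γ : D3 forces y - β nonzero integer; use l = (x, 1, 1) ∈ B
      rcases D3 with ⟨q, hq, hzq⟩ | ⟨q, hq, hyq⟩ | hxα
      · exact hγ q (by rw [← hzγ, hzq])
      · have := h _ (hBm m 1 1 hm one_ne_zero one_ne_zero)
        rw [hsub] at this
        refine aux_notG ?_ ?_ ?_ this
        · rw [hxm]; simpa [sub_self] using aux_zero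
        · exact aux_notint (aux_shift hβ (q - 1) (by push_cast; linarith))
        · exact aux_notint (aux_shift hγ (-1) (by push_cast; linarith))
      · exact hα m (by rw [← hxα, hxm])
  · -- z - γ is a nonzero integer m
    have hznotint : ∀ k : ℤ, z ≠ k := aux_shift hγ m (by linarith)
    rcases D3 with ⟨q, hq, hzq⟩ | ⟨q, hq, hyq⟩ | hxα
    · exact hznotint q hzq
    · -- y - β = q ≠ 0; D2 then forces x - α nonzero integer; use l = (1,1,1)
      rcases D2 with ⟨n, hn, hyn⟩ | ⟨n, hn, hxn⟩ | hzγ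
      · exact aux_shift hβ q (by linarith) n hyn
      · have := h _ (hBm 1 1 1 one_ne_zero one_ne_zero one_ne_zero)
        rw [hsub] at this
        refine aux_notG ?_ ?_ ?_ this
        · exact aux_notint (aux_shift hα (n - 1) (by push_cast; linarith))
        · exact aux_notint (aux_shift hβ (q - 1) (by push_cast; linarith))
        · exact aux_notint (aux_shift hγ (m - 1) (by push_cast; linarith))
      · exact hm (by exact_mod_cast (by rw [hzγ] at hzm; simpa using hzm.symm : (m : ℝ) = 0))
    · -- x = α; D2 forces y nonzero integer; use l = (1, y, 1)
      rcases D2 with ⟨n, hn, hyn⟩ | ⟨n, hn, hxn⟩ | hzγ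
      · have := h _ (hBm 1 n 1 one_ne_zero hn one_ne_zero)
        rw [hsub] at this
        refine aux_notG ?_ ?_ ?_ this
        · exact aux_notint (aux_shift hα (-1) (by push_cast; linarith))
        · rw [hyn]; simpa [sub_self] using aux_zero
        · exact aux_notint (aux_shift hγ (m - 1) (by push_cast; linarith))
      · exact hn (by exact_mod_cast (by rw [hxα] at hxn; simpa using hxn.symm : (n : ℝ) = 0))
      · exact hm (by exact_mod_cast (by rw [hzγ] at hzm; simpa using hzm.symm : (m : ℝ) = 0))
  · -- y = β
    rcases D3 with ⟨q, hq, hzq⟩ | ⟨q, hq, hyq⟩ | hxα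
    · -- z nonzero integer; D2 forces x - α nonzero integer; use l = (1, 1, z)
      rcases D2 with ⟨n, hn, hyn⟩ | ⟨n, hn, hxn⟩ | hzγ
      · exact hβ n (by rw [← hyβ, hyn])
      · have := h _ (hBm 1 1 q one_ne_zero one_ne_zero hq)
        rw [hsub] at this
        refine aux_notG ?_ ?_ ?_ this
        · exact aux_notint (aux_shift hα (n - 1) (by push_cast; linarith))
        · exact aux_notint (aux_shift hβ (-1) (by push_cast; linarith))
        · rw [hzq]; simpa [sub_self] using aux_zero
      · exact hγ q (by rw [← hzγ, hzq])
    · exact hq (by exact_mod_cast (by rw [hyβ] at hyq; simpa using hyq.symm : (q : ℝ) = 0))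
    · -- x = α, y = β; D2 forces z = γ; use l = (1,1,1)
      rcases D2 with ⟨n, hn, hyn⟩ | ⟨n, hn, hxn⟩ | hzγ
      · exact hβ n (by rw [← hyβ, hyn])
      · exact hn (by exact_mod_cast (by rw [hxα] at hxn; simpa using hxn.symm : (n : ℝ) = 0))
      · have := h _ (hBm 1 1 1 one_ne_zero one_ne_zero one_ne_zero)
        rw [hsub] at this
        refine aux_notG ?_ ?_ ?_ this
        · exact aux_notint (aux_shift hα (-1) (by push_cast; linarith))
        · exact aux_notint (aux_shift hβ (-1) (by push_cast; linarith))
        · exact aux_notint (aux_shift hγ (-1) (by push_cast; linarith))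
end

section
/- Fix α, β, γ ∈ ℝ \ ℤ. The set Λ ⊂ ℝ³ consisting of (0,0,0) and all points (n, β−k, γ), (α, n, γ−k), (α−k, β, n) with n, k ∈ ℤ \ {0} is a maximal orthogonal set for the unit cube: there is no s ∈ ℝ³ \ Λ with s − Λ ⊆ G, where G = {ξ ∈ ℝ³ : some coordinate in ℤ \ {0}}. -/
/-- Auxiliary predicate: some entry is a nonzero integer. -/
def Ptriple (a b c : ℝ) : Prop :=
  (∃ k : ℤ, k ≠ 0 ∧ a = (k : ℝ)) ∨ (∃ k : ℤ, k ≠ 0 ∧ b = (k : ℝ)) ∨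
    (∃ k : ℤ, k ≠ 0 ∧ c = (k : ℝ))

lemma Ptriple_rot {a b c : ℝ} (h : Ptriple a b c) : Ptriple b c a := by
  rcases h with h | h | h
  exacts [Or.inr (Or.inr h), Or.inl h, Or.inr (Or.inl h)]

lemma subA (x : ℝ) (h : ∀ k : ℤ, k ≠ 0 → ∃ j : ℤ, j ≠ 0 ∧ x + k = j) : x = 0 := by
  obtain ⟨j, hj, hjv⟩ := h 1 one_ne_zero
  by_cases hx : j - 1 = 0
  · have hj1 : j = 1 := by omega
    subst hj1; push_cast at hjv; linarith
  · obtain ⟨j', hj', hjv'⟩ := h (-(j - 1)) (neg_ne_zero.mpr hx)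
    have hz : (j' : ℝ) = 0 := by push_cast at hjv hjv' ⊢; linarith
    exact absurd (show j' = 0 by exact_mod_cast hz) hj'

lemma key (a b c p q r : ℝ) (hp : ∀ j : ℤ, p ≠ j) (hq : ∀ j : ℤ, q ≠ j)
    (hr : ∀ j : ℤ, r ≠ j)
    (m : ℤ) (hm : m ≠ 0) (ha : a = m)
    (h1 : ∀ n k : ℤ, n ≠ 0 → k ≠ 0 → Ptriple (a - n) (b - (q - k)) (c - r))
    (h2 : ∀ n k : ℤ, n ≠ 0 → k ≠ 0 → Ptriple (a - p) (b - n) (c - (r - k)))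
    (h3 : ∀ n k : ℤ, n ≠ 0 → k ≠ 0 → Ptriple (a - (p - k)) (b - q) (c - n)) :
    False := by
  have nap : ¬ ∃ j : ℤ, j ≠ 0 ∧ a - p = j := by
    rintro ⟨j, -, hj⟩; exact hp (m - j) (by push_cast; linarith)
  have napk : ∀ k : ℤ, ¬ ∃ j : ℤ, j ≠ 0 ∧ a - (p - k) = j := by
    rintro k ⟨j, -, hj⟩; exact hp (m + k - j) (by push_cast; linarith)
  by_cases hb : ∃ u : ℤ, b = u
  · obtain ⟨u, hu⟩ := hb
    have nbq : ¬ ∃ j : ℤ, j ≠ 0 ∧ b - q = j := by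
      rintro ⟨j, -, hj⟩; exact hq (u - j) (by push_cast; linarith)
    have hc : c = 0 := by
      apply subA; intro k hk
      rcases h3 (-k) 1 (neg_ne_zero.mpr hk) one_ne_zero with h | h | h
      · exact absurd h (napk 1)
      · exact absurd h nbq
      · obtain ⟨j, hj, hjv⟩ := h; exact ⟨j, hj, by push_cast at hjv ⊢; linarith⟩
    rcases h1 m 1 hm one_ne_zero with h | h | h
    · obtain ⟨j, hj, hjv⟩ := h
      have : (j : ℝ) = 0 := by rw [ha] at hjv; linarith
      exact hj (by exact_mod_cast this)
    · obtain ⟨j, hj, hjv⟩ := h; exact hq (u + 1 - j) (by push_cast at hjv ⊢; linarith)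
    · obtain ⟨j, hj, hjv⟩ := h; exact hr (-j) (by push_cast; linarith)
  · push_neg at hb
    have nbn : ∀ n : ℤ, ¬ ∃ j : ℤ, j ≠ 0 ∧ b - n = j := by
      rintro n ⟨j, -, hj⟩; exact hb (j + n) (by push_cast; linarith)
    have hcr : c - r = 0 := by
      apply subA; intro k hk
      rcases h2 1 k one_ne_zero hk with h | h | h
      · exact absurd h nap
      · exact absurd h (nbn 1)
      · obtain ⟨j, hj, hjv⟩ := h; exact ⟨j, hj, by push_cast at hjv ⊢; linarith⟩
    have hbq : b - q = 0 := by
      apply subA; intro k hk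
      rcases h1 m k hm hk with h | h | h
      · obtain ⟨j, hj, hjv⟩ := h
        have : (j : ℝ) = 0 := by rw [ha] at hjv; linarith
        exact absurd (by exact_mod_cast this : j = 0) hj
      · obtain ⟨j, hj, hjv⟩ := h; exact ⟨j, hj, by push_cast at hjv ⊢; linarith⟩
      · obtain ⟨j, hj, hjv⟩ := h
        have : (j : ℝ) = 0 := by linarith
        exact absurd (by exact_mod_cast this : j = 0) hj
    rcases h3 1 1 one_ne_zero one_ne_zero with h | h | h
    · exact absurd h (napk 1)
    · obtain ⟨j, hj, hjv⟩ := h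
      have : (j : ℝ) = 0 := by linarith
      exact hj (by exact_mod_cast this)
    · obtain ⟨j, hj, hjv⟩ := h; exact hr (j + 1) (by push_cast at hjv ⊢; linarith)

theorem stmt_12 (α β γ : ℝ) (hα : ∀ k : ℤ, α ≠ k) (hβ : ∀ k : ℤ, β ≠ k)
    (hγ : ∀ k : ℤ, γ ≠ k)
    (Λ : Set (ℝ × ℝ × ℝ))
    (hΛ : Λ = insert (0, 0, 0) {x | ∃ n : ℤ, ∃ k : ℤ, n ≠ 0 ∧ k ≠ 0 ∧
      (x = ((n : ℝ), β - k, γ) ∨ x = (α, (n : ℝ), γ - k) ∨ x = (α - k, β, (n : ℝ)))}) :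
    ¬ ∃ s : ℝ × ℝ × ℝ, s ∉ Λ ∧ ∀ l ∈ Λ, s - l ∈ Gset := by
  rintro ⟨⟨x, y, z⟩, -, hs⟩
  subst hΛ
  have h0 : Ptriple x y z := by
    have := hs (0, 0, 0) (Set.mem_insert _ _)
    simpa [Gset, Ptriple, Prod.sub_def] using this
  have h1 : ∀ n k : ℤ, n ≠ 0 → k ≠ 0 → Ptriple (x - n) (y - (β - k)) (z - γ) := by
    intro n k hn hk
    have := hs ((n : ℝ), β - k, γ)
      (Set.mem_insert_iff.mpr (Or.inr ⟨n, k, hn, hk, Or.inl rfl⟩))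
    simpa [Gset, Ptriple, Prod.sub_def] using this
  have h2 : ∀ n k : ℤ, n ≠ 0 → k ≠ 0 → Ptriple (x - α) (y - n) (z - (γ - k)) := by
    intro n k hn hk
    have := hs (α, (n : ℝ), γ - k)
      (Set.mem_insert_iff.mpr (Or.inr ⟨n, k, hn, hk, Or.inr (Or.inl rfl)⟩))
    simpa [Gset, Ptriple, Prod.sub_def] using this
  have h3 : ∀ n k : ℤ, n ≠ 0 → k ≠ 0 → Ptriple (x - (α - k)) (y - β) (z - n) := by
    intro n k hn hk
    have := hs (α - k, β, (n : ℝ))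
      (Set.mem_insert_iff.mpr (Or.inr ⟨n, k, hn, hk, Or.inr (Or.inr rfl)⟩))
    simpa [Gset, Ptriple, Prod.sub_def] using this
  rcases h0 with ⟨m, hm, hx⟩ | ⟨m, hm, hy⟩ | ⟨m, hm, hz⟩
  · exact key x y z α β γ hα hβ hγ m hm hx h1 h2 h3
  · exact key y z x β γ α hβ hγ hα m hm hy
      (fun n k hn hk => Ptriple_rot (h2 n k hn hk))
      (fun n k hn hk => Ptriple_rot (h3 n k hn hk))
      (fun n k hn hk => Ptriple_rot (h1 n k hn hk))
  · exact key z x y γ α β hγ hα hβ m hm hz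
      (fun n k hn hk => Ptriple_rot (Ptriple_rot (h3 n k hn hk)))
      (fun n k hn hk => Ptriple_rot (Ptriple_rot (h1 n k hn hk)))
      (fun n k hn hk => Ptriple_rot (Ptriple_rot (h2 n k hn hk)))
end

section
/- Let Λ ⊂ ℝⁿ be a maximal orthogonal set for the unit cube in ℝⁿ. Define Γ = A ∪ B ⊂ ℝⁿ × ℝᵐ where A = {(λ, 0) : λ ∈ Λ} and B = {(p,q) ∈ ℤⁿ × ℤᵐ : q ≠ 0}. Then Γ is a maximal orthogonal set for the unit cube in ℝ^{n+m}. -/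
/-- An orthogonal set for the unit cube: distinct elements differ by a nonzero
integer in some coordinate. -/
def IsOrtho {ι : Type*} (Λ : Set (ι → ℝ)) : Prop :=
  ∀ l ∈ Λ, ∀ m ∈ Λ, l ≠ m → ∃ j : ι, ∃ k : ℤ, k ≠ 0 ∧ l j - m j = (k : ℝ)

/-- A maximal orthogonal set for the unit cube. -/
def IsMaxOrtho {ι : Type*} (Λ : Set (ι → ℝ)) : Prop :=
  IsOrtho Λ ∧ ∀ s ∉ Λ, ¬ IsOrtho (insert s Λ)

lemma not_int_sub (a : ℝ) (ha : ∀ k : ℤ, a ≠ k) (c k : ℤ) : a - c ≠ k := by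
  intro h
  exact ha (k + c) (by push_cast; linarith)

/-- If `Λ` is a maximal orthogonal set for the unit cube in `ℝⁿ`, then
`Γ = {(λ,0) : λ ∈ Λ} ∪ {(p,q) ∈ ℤⁿ × ℤᵐ : q ≠ 0}` is a maximal orthogonal set
for the unit cube in `ℝⁿ × ℝᵐ` (coordinates indexed by `Fin n ⊕ Fin m`). -/
theorem stmt_13 (n m : ℕ) (Λ : Set (Fin n → ℝ)) (hΛ : IsMaxOrtho Λ)
    (Γ : Set (Fin n ⊕ Fin m → ℝ))
    (hΓ : Γ = {v | ∃ l ∈ Λ, v = Sum.elim l 0} ∪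
      {v | (∀ i, ∃ k : ℤ, v i = (k : ℝ)) ∧ ∃ j : Fin m, v (Sum.inr j) ≠ 0}) :
    IsMaxOrtho Γ := by
  classical
  subst hΓ
  obtain ⟨hO, hM⟩ := hΛ
  constructor
  · rintro u hu v hv huv
    rcases hu with ⟨l, hl, rfl⟩ | ⟨huint, j, hj⟩
    · rcases hv with ⟨l', hl', rfl⟩ | ⟨hvint, j, hj⟩
      · have hne : l ≠ l' := fun h => huv (by rw [h])
        obtain ⟨i, k, hk, hik⟩ := hO l hl l' hl' hne
        exact ⟨Sum.inl i, k, hk, by simpa using hik⟩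
      · obtain ⟨k, hk⟩ := hvint (Sum.inr j)
        refine ⟨Sum.inr j, -k, ?_, ?_⟩
        · intro h
          apply hj
          rw [hk]
          have : k = 0 := by omega
          simp [this]
        · simp [hk]
    · rcases hv with ⟨l', hl', rfl⟩ | ⟨hvint, j', hj'⟩
      · obtain ⟨k, hk⟩ := huint (Sum.inr j)
        refine ⟨Sum.inr j, k, ?_, ?_⟩
        · intro h
          apply hj
          rw [hk, h]; simp
        · simp [hk]
      · obtain ⟨i, hi⟩ := Function.ne_iff.mp huv
        obtain ⟨k, hk⟩ := huint i
        obtain ⟨k', hk'⟩ := hvint i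
        refine ⟨i, k - k', ?_, by rw [hk, hk']; push_cast; ring⟩
        intro h
        apply hi
        have : k = k' := by omega
        rw [hk, hk', this]
  · rintro s hs hins
    by_cases hY : ∀ j : Fin m, ∃ k : ℤ, s (Sum.inr j) = k
    · by_cases hY0 : ∀ j : Fin m, s (Sum.inr j) = 0
      · -- all inr coordinates are zero: lift the maximality of Λ
        set x : Fin n → ℝ := fun i => s (Sum.inl i) with hx
        have hsx : s = Sum.elim x 0 := by
          funext i
          cases i with
          | inl i => rfl
          | inr j => exact hY0 j
        have hxΛ : x ∉ Λ := fun h => hs (Or.inl ⟨x, h, hsx⟩)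
        apply hM x hxΛ
        rintro l hl m' hm' hne
        have hmem : ∀ w, w ∈ insert x Λ →
            Sum.elim w (0 : Fin m → ℝ) ∈ insert s
              ({v | ∃ l ∈ Λ, v = Sum.elim l 0} ∪
               {v | (∀ i, ∃ k : ℤ, v i = (k : ℝ)) ∧ ∃ j : Fin m, v (Sum.inr j) ≠ 0}) := by
          rintro w (rfl | hw)
          · rw [← hsx]; exact Set.mem_insert _ _
          · exact Set.mem_insert_of_mem _ (Or.inl ⟨w, hw, rfl⟩)
        have hne' : Sum.elim l (0 : Fin m → ℝ) ≠ Sum.elim m' 0 := by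
          intro h
          exact hne (funext fun i => congrFun h (Sum.inl i))
        obtain ⟨i, k, hk, hik⟩ := hins _ (hmem l hl) _ (hmem m' hm') hne'
        cases i with
        | inl i => exact ⟨i, k, hk, hik⟩
        | inr j =>
          exfalso
          apply hk
          simpa using hik.symm
      · push_neg at hY0
        obtain ⟨j₀, hj₀⟩ := hY0
        by_cases hX : ∀ i : Fin n, ∃ k : ℤ, s (Sum.inl i) = k
        · -- s is an integer vector with a nonzero inr coordinate: s ∈ Γ
          apply hs
          right
          refine ⟨fun i => ?_, j₀, hj₀⟩
          cases i with
          | inl i => exact hX i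
          | inr j => exact hY j
        · push_neg at hX
          obtain ⟨i₀, hi₀⟩ := hX
          set v : Fin n ⊕ Fin m → ℝ :=
            fun i => if h : ∃ k : ℤ, s i = k then s i else (⌊s i⌋ : ℝ) with hv
          have hvint : ∀ i, ∃ k : ℤ, v i = (k : ℝ) := by
            intro i
            by_cases h : ∃ k : ℤ, s i = k
            · obtain ⟨k, hk⟩ := h
              exact ⟨k, by simp [hv, hk]⟩
            · exact ⟨⌊s i⌋, by simp [hv, h]⟩
          have hvj₀ : v (Sum.inr j₀) = s (Sum.inr j₀) := by
            simp [hv, hY j₀]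
          have hvmem : v ∈ insert s
              ({v | ∃ l ∈ Λ, v = Sum.elim l 0} ∪
               {v | (∀ i, ∃ k : ℤ, v i = (k : ℝ)) ∧ ∃ j : Fin m, v (Sum.inr j) ≠ 0}) :=
            Set.mem_insert_of_mem _ (Or.inr ⟨hvint, j₀, by rw [hvj₀]; exact hj₀⟩)
          have hne : s ≠ v := by
            intro h
            have h1 := congrFun h (Sum.inl i₀)
            have hni : ¬∃ k : ℤ, s (Sum.inl i₀) = (k : ℝ) := by push_neg; exact hi₀
            have hvi : v (Sum.inl i₀) = (⌊s (Sum.inl i₀)⌋ : ℝ) := by simp [hv, hni]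
            rw [hvi] at h1
            exact hi₀ _ h1
          obtain ⟨i, k, hk, hik⟩ := hins s (Set.mem_insert _ _) v hvmem hne
          by_cases h : ∃ k' : ℤ, s i = k'
          · have : v i = s i := by simp [hv, h]
            rw [this] at hik
            apply hk
            simpa using hik.symm
          · have hvi : v i = (⌊s i⌋ : ℝ) := by simp [hv, h]
            push_neg at h
            rw [hvi] at hik
            exact not_int_sub (s i) h ⌊s i⌋ k hik
    · push_neg at hY
      obtain ⟨j₀, hj₀⟩ := hY
      set c₀ : ℤ := if ⌊s (Sum.inr j₀)⌋ = 0 then 1 else ⌊s (Sum.inr j₀)⌋ with hc₀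
      have hc₀ne : c₀ ≠ 0 := by
        rw [hc₀]; split <;> simp_all
      set v : Fin n ⊕ Fin m → ℝ :=
        fun i => if i = Sum.inr j₀ then (c₀ : ℝ)
          else if h : ∃ k : ℤ, s i = k then s i else (⌊s i⌋ : ℝ) with hv
      have hvint : ∀ i, ∃ k : ℤ, v i = (k : ℝ) := by
        intro i
        by_cases hij : i = Sum.inr j₀
        · exact ⟨c₀, by simp [hv, hij]⟩
        · by_cases h : ∃ k : ℤ, s i = k
          · obtain ⟨k, hk⟩ := h
            exact ⟨k, by simp [hv, hij, hk]⟩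
          · exact ⟨⌊s i⌋, by simp [hv, hij, h]⟩
      have hvj₀ : v (Sum.inr j₀) = (c₀ : ℝ) := by simp [hv]
      have hvmem : v ∈ insert s
          ({v | ∃ l ∈ Λ, v = Sum.elim l 0} ∪
           {v | (∀ i, ∃ k : ℤ, v i = (k : ℝ)) ∧ ∃ j : Fin m, v (Sum.inr j) ≠ 0}) :=
        Set.mem_insert_of_mem _ (Or.inr ⟨hvint, j₀, by rw [hvj₀]; exact_mod_cast hc₀ne⟩)
      have hne : s ≠ v := by
        intro h
        have := congrFun h (Sum.inr j₀)
        rw [hvj₀] at this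
        exact hj₀ _ this
      obtain ⟨i, k, hk, hik⟩ := hins s (Set.mem_insert _ _) v hvmem hne
      by_cases hij : i = Sum.inr j₀
      · subst hij
        rw [hvj₀] at hik
        exact not_int_sub _ hj₀ c₀ k hik
      · by_cases h : ∃ k' : ℤ, s i = k'
        · have : v i = s i := by simp [hv, hij, h]
          rw [this] at hik
          apply hk
          simpa using hik.symm
        · have hvi : v i = (⌊s i⌋ : ℝ) := by simp [hv, hij, h]
          push_neg at h
          rw [hvi] at hik
          exact not_int_sub (s i) h ⌊s i⌋ k hik
end

section
/- If A ⊂ ℝⁿ and B ⊂ ℝᵐ are maximal orthogonal sets for the unit cubes in ℝⁿ and ℝᵐ respectively, then A × B is a maximal orthogonal set for the unit cube in ℝⁿ × ℝᵐ. -/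
/-- The cartesian product of maximal orthogonal sets for the unit cubes in `ℝⁿ`
and `ℝᵐ` is a maximal orthogonal set for the unit cube in `ℝⁿ × ℝᵐ`. -/
theorem stmt_14 (n m : ℕ) (A : Set (Fin n → ℝ)) (B : Set (Fin m → ℝ))
    (hA : IsMaxOrtho A) (hB : IsMaxOrtho B) :
    IsMaxOrtho {v : Fin n ⊕ Fin m → ℝ | ∃ a ∈ A, ∃ b ∈ B, v = Sum.elim a b} := by
  set P : Set (Fin n ⊕ Fin m → ℝ) :=
    {v : Fin n ⊕ Fin m → ℝ | ∃ a ∈ A, ∃ b ∈ B, v = Sum.elim a b} with hP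
  constructor
  · rintro l ⟨a, ha, b, hb, rfl⟩ m' ⟨a', ha', b', hb', rfl⟩ hne
    by_cases hab : a = a'
    · subst hab
      have hbb : b ≠ b' := by
        rintro rfl; exact hne rfl
      obtain ⟨j, k, hk, hjk⟩ := hB.1 b hb b' hb' hbb
      exact ⟨Sum.inr j, k, hk, hjk⟩
    · obtain ⟨j, k, hk, hjk⟩ := hA.1 a ha a' ha' hab
      exact ⟨Sum.inl j, k, hk, hjk⟩
  · intro s hs hins
    set sa : Fin n → ℝ := fun j => s (Sum.inl j) with hsa
    set sb : Fin m → ℝ := fun j => s (Sum.inr j) with hsb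
    have hse : s = Sum.elim sa sb := by
      funext j; cases j <;> rfl
    have hmem : ∀ a ∈ A, ∀ b ∈ B, Sum.elim a b ∈ P := by
      intro a ha b hb; exact ⟨a, ha, b, hb, rfl⟩
    by_cases hsaA : sa ∈ A
    · -- then sb ∉ B, and insert sb B is orthogonal: contradiction
      have hsbB : sb ∉ B := by
        intro hsbB; exact hs ⟨sa, hsaA, sb, hsbB, hse⟩
      refine hB.2 sb hsbB ?_
      rintro l (rfl | hl) m' (rfl | hm) hne
      · exact absurd rfl hne
      · -- l = sb, m' ∈ B
        have hne' : s ≠ Sum.elim sa m' := by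
          intro h
          apply hne
          have := congrFun h
          funext j; exact this (Sum.inr j)
        obtain ⟨j, k, hk, hjk⟩ := hins s (Set.mem_insert _ _)
          (Sum.elim sa m') (Set.mem_insert_of_mem _ (hmem sa hsaA m' hm)) hne'
        cases j with
        | inl j =>
          exfalso
          rw [hse] at hjk; simp only [Sum.elim_inl, Sum.elim_inr] at hjk
          simp at hjk
          exact hk (by exact_mod_cast hjk.symm)
        | inr j =>
          rw [hse] at hjk; simp only [Sum.elim_inl, Sum.elim_inr] at hjk
          exact ⟨j, k, hk, hjk⟩
      · -- l ∈ B, m' = sb : use symmetry via negation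
        have hne' : Sum.elim sa l ≠ s := by
          intro h
          apply hne
          have := congrFun h
          funext j; exact this (Sum.inr j)
        obtain ⟨j, k, hk, hjk⟩ := hins (Sum.elim sa l)
          (Set.mem_insert_of_mem _ (hmem sa hsaA l hl)) s (Set.mem_insert _ _) hne'
        cases j with
        | inl j =>
          exfalso
          rw [hse] at hjk; simp only [Sum.elim_inl, Sum.elim_inr] at hjk
          simp at hjk
          exact hk (by exact_mod_cast hjk.symm)
        | inr j =>
          rw [hse] at hjk; simp only [Sum.elim_inl, Sum.elim_inr] at hjk
          exact ⟨j, k, hk, hjk⟩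
      · exact hB.1 l hl m' hm hne
    · -- sa ∉ A
      by_cases hgood : ∀ a ∈ A, ∃ j, ∃ k : ℤ, k ≠ 0 ∧ sa j - a j = (k : ℝ)
      · -- insert sa A is orthogonal : contradiction
        refine hA.2 sa hsaA ?_
        rintro l (rfl | hl) m' (rfl | hm) hne
        · exact absurd rfl hne
        · exact hgood m' hm
        · obtain ⟨j, k, hk, hjk⟩ := hgood l hl
          refine ⟨j, -k, by simpa using hk, ?_⟩
          push_cast
          linarith [hjk]
        · exact hA.1 l hl m' hm hne
      · push_neg at hgood
        obtain ⟨a, ha, hbad⟩ := hgood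
        have hane : sa ≠ a := fun h => hsaA (h ▸ ha)
        -- key: for any b ∈ B with b ≠ sb, sb and b differ by an integer
        have key : ∀ b ∈ B, b ≠ sb → ∃ j, ∃ k : ℤ, k ≠ 0 ∧ sb j - b j = (k : ℝ) := by
          intro b hb hbne
          have hne' : s ≠ Sum.elim a b := by
            intro h
            apply hane
            have := congrFun h
            funext j
            have := this (Sum.inl j)
            rw [hse] at this
            exact this
          obtain ⟨j, k, hk, hjk⟩ := hins s (Set.mem_insert _ _)
            (Sum.elim a b) (Set.mem_insert_of_mem _ (hmem a ha b hb)) hne'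
          cases j with
          | inl j =>
            exfalso
            rw [hse] at hjk; simp only [Sum.elim_inl, Sum.elim_inr] at hjk
            exact hbad j k hk hjk
          | inr j =>
            rw [hse] at hjk; simp only [Sum.elim_inl, Sum.elim_inr] at hjk
            exact ⟨j, k, hk, hjk⟩
        by_cases hsbB : sb ∈ B
        · -- compare s with Sum.elim a sb
          have hne' : s ≠ Sum.elim a sb := by
            intro h
            apply hane
            have := congrFun h
            funext j
            have := this (Sum.inl j)
            rw [hse] at this
            exact this
          obtain ⟨j, k, hk, hjk⟩ := hins s (Set.mem_insert _ _)
            (Sum.elim a sb) (Set.mem_insert_of_mem _ (hmem a ha sb hsbB)) hne'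
          cases j with
          | inl j =>
            rw [hse] at hjk; simp only [Sum.elim_inl, Sum.elim_inr] at hjk
            exact hbad j k hk hjk
          | inr j =>
            rw [hse] at hjk; simp only [Sum.elim_inl, Sum.elim_inr] at hjk
            simp at hjk
            exact hk (by exact_mod_cast hjk.symm)
        · refine hB.2 sb hsbB ?_
          rintro l (rfl | hl) m' (rfl | hm) hne
          · exact absurd rfl hne
          · exact key m' hm (Ne.symm hne)
          · obtain ⟨j, k, hk, hjk⟩ := key l hl hne
            refine ⟨j, -k, by simpa using hk, ?_⟩
            push_cast
            linarith [hjk]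
          · exact hB.1 l hl m' hm hne
end

section
/- Let p < q < r be distinct odd primes, N = p²q²r², φ(a,b,c) = q²r²a + p²r²b + p²q²c, and H₀ = {(a,b,c) : 0 ≤ a ≤ p−1, 0 ≤ b ≤ q−1, 0 ≤ c ≤ r−1}, with φ(H₀) viewed as a subset of {0,1,…,N−1} ⊂ ℤ. Then for ξ ∈ ℝ, the exponential sum Σ_{h ∈ φ(H₀)} e^{−2πi h ξ/N} equals zero only if ξ ∈ ℤ; equivalently, the Fourier transform of 1_{φ(H₀)} on ℝ/ℤ has no zeros outside (1/(p²q²r²))ℤ. -/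
/-!
The vectors `(a, b, c)` of `H₀` are recovered from `φ(a, b, c)` by reducing modulo `p²`, `q²`
and `r²`, because the coefficients are pairwise coprime. Hence the sum over `φ(H₀)` is a sum over
`H₀`, and since `e^{-2πiφ(a,b,c)ξ/N} = w_p^a w_q^b w_r^c` with `w_n = e^{-2πiξ/n²}`, it factors as
a product of three geometric sums. If `∑_{a<n} w_n^a = 0` then `w_n^n = e^{-2πiξ/n} = 1`, so
`ξ ∈ nℤ ⊆ ℤ`.
-/

open Real Finset

lemma exists_int_eq_of_geom_sum_exp_eq_zero {n : ℕ} (hn : n ≠ 0) {ξ : ℝ}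
    (h : ∑ a ∈ range n, Complex.exp (-(2 * π * Complex.I) * ξ / (n : ℂ) ^ 2) ^ a = 0) :
    ∃ k : ℤ, ξ = k := by
  have hpow : Complex.exp (-(2 * π * Complex.I) * ξ / (n : ℂ) ^ 2) ^ n = 1 := by
    rw [← sub_eq_zero, ← geom_sum_mul, h, zero_mul]
  obtain ⟨m, hm⟩ := Complex.exp_eq_one_iff.mp <| by
    simpa only [← Complex.exp_nat_mul] using hpow
  refine ⟨-(m * n), Complex.ofReal_injective ?_⟩
  have hn' : (n : ℂ) ≠ 0 := Nat.cast_ne_zero.mpr hn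
  field_simp at hm
  push_cast
  linear_combination -hm

lemma Finset.sum_product_product_mul {ι κ μ R : Type*} [CommSemiring R] (s : Finset ι)
    (t : Finset κ) (u : Finset μ) (f : ι → R) (g : κ → R) (h : μ → R) :
    ∑ x ∈ s ×ˢ t ×ˢ u, f x.1 * g x.2.1 * h x.2.2 =
      (∑ i ∈ s, f i) * (∑ j ∈ t, g j) * (∑ k ∈ u, h k) := by
  simp_rw [sum_product, sum_mul_sum, sum_mul]
  exact sum_congr rfl fun _ _ => sum_comm

lemma Nat.eq_of_dvd_mul_sub_of_isCoprime {m k : ℤ} {a b : ℕ} (hmk : IsCoprime m k)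
    (hdvd : m ∣ k * (a - b)) (ha : (a : ℤ) < m) (hb : (b : ℤ) < m) : a = b := by
  have := Int.eq_zero_of_abs_lt_dvd (hmk.dvd_of_dvd_mul_left hdvd) (by rw [abs_lt]; omega)
  omega

lemma injOn_cofactorWeightedSum {m₁ m₂ m₃ : ℤ} (h₁₂ : IsCoprime m₁ m₂) (h₁₃ : IsCoprime m₁ m₃)
    (h₂₃ : IsCoprime m₂ m₃) :
    Set.InjOn (fun t : ℕ × ℕ × ℕ => m₂ * m₃ * t.1 + m₁ * m₃ * t.2.1 + m₁ * m₂ * t.2.2)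
      {t | (t.1 : ℤ) < m₁ ∧ (t.2.1 : ℤ) < m₂ ∧ (t.2.2 : ℤ) < m₃} := by
  rintro ⟨a, b, c⟩ ⟨ha, hb, hc⟩ ⟨a', b', c'⟩ ⟨ha', hb', hc'⟩ heq
  simp only at ha hb hc ha' hb' hc' heq
  have haa : a = a' := Nat.eq_of_dvd_mul_sub_of_isCoprime (h₁₂.mul_right h₁₃)
    ⟨m₃ * (b' - b) + m₂ * (c' - c), by linear_combination heq⟩ ha ha'
  have hbb : b = b' := Nat.eq_of_dvd_mul_sub_of_isCoprime (h₁₂.symm.mul_right h₂₃)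
    ⟨m₃ * (a' - a) + m₁ * (c' - c), by linear_combination heq⟩ hb hb'
  have hcc : c = c' := Nat.eq_of_dvd_mul_sub_of_isCoprime (h₁₃.symm.mul_right h₂₃.symm)
    ⟨m₂ * (a' - a) + m₁ * (b' - b), by linear_combination heq⟩ hc hc'
  rw [haa, hbb, hcc]

lemma exp_mul_cofactorWeightedSum_div (x : ℂ) {m₁ m₂ m₃ : ℂ} (h₁ : m₁ ≠ 0) (h₂ : m₂ ≠ 0)
    (h₃ : m₃ ≠ 0) (a b c : ℕ) :
    Complex.exp (x * (m₂ * m₃ * a + m₁ * m₃ * b + m₁ * m₂ * c) / (m₁ * m₂ * m₃)) =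
      Complex.exp (x / m₁) ^ a * Complex.exp (x / m₂) ^ b * Complex.exp (x / m₃) ^ c := by
  simp only [← Complex.exp_nat_mul, ← Complex.exp_add]
  congr 1
  field_simp

theorem stmt_19_general (p q r : ℕ) (hp : p.Prime) (hq : q.Prime) (hr : r.Prime)
    (hpq : p < q) (hqr : q < r)
    (ξ : ℝ)
    (hsum : ∑ h ∈ (Finset.range p ×ˢ Finset.range q ×ˢ Finset.range r).image
        (fun t : ℕ × ℕ × ℕ =>
          (q : ℤ)^2 * (r : ℤ)^2 * t.1 + (p : ℤ)^2 * (r : ℤ)^2 * t.2.1 +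
            (p : ℤ)^2 * (q : ℤ)^2 * t.2.2),
      Complex.exp (-(2 * π * Complex.I) * (h : ℂ) * (ξ : ℂ) /
        ((p : ℂ)^2 * (q : ℂ)^2 * (r : ℂ)^2)) = 0) :
    ∃ k : ℤ, ξ = (k : ℝ) := by
  have hcop {m n : ℕ} (hm : m.Prime) (hn : n.Prime) (hmn : m < n) :
      IsCoprime ((m : ℤ) ^ 2) ((n : ℤ) ^ 2) :=
    (Nat.isCoprime_iff_coprime.mpr ((Nat.coprime_primes hm hn).mpr hmn.ne)).pow
  have hlt {a n : ℕ} (h : a < n) : (a : ℤ) < (n : ℤ) ^ 2 := by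
    exact_mod_cast h.trans_le (Nat.le_self_pow two_ne_zero _)
  have hinj : Set.InjOn _ ↑(range p ×ˢ range q ×ˢ range r) :=
    (injOn_cofactorWeightedSum (hcop hp hq hpq) (hcop hp hr (hpq.trans hqr)) (hcop hq hr hqr)).mono
      fun t ht => by
        simp only [coe_product, coe_range, Set.mem_prod, Set.mem_Iio] at ht
        exact ⟨hlt ht.1, hlt ht.2.1, hlt ht.2.2⟩
  have exp_term (t : ℕ × ℕ × ℕ) := exp_mul_cofactorWeightedSum_div (-(2 * π * Complex.I) * ξ)
    (m₁ := (p : ℂ) ^ 2) (m₂ := (q : ℂ) ^ 2) (m₃ := (r : ℂ) ^ 2) (by simp [hp.ne_zero])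
    (by simp [hq.ne_zero]) (by simp [hr.ne_zero]) t.1 t.2.1 t.2.2
  rw [sum_image hinj] at hsum
  simp only [mul_right_comm _ _ (ξ : ℂ), Int.cast_add, Int.cast_mul, Int.cast_pow,
    Int.cast_natCast, exp_term, sum_product_product_mul, mul_eq_zero] at hsum
  rcases hsum with (hsum | hsum) | hsum
  · exact exists_int_eq_of_geom_sum_exp_eq_zero hp.ne_zero hsum
  · exact exists_int_eq_of_geom_sum_exp_eq_zero hq.ne_zero hsum
  · exact exists_int_eq_of_geom_sum_exp_eq_zero hr.ne_zero hsum

/-- Let `p < q < r` be odd primes, `N = p²q²r²`, `φ(a,b,c) = q²r²a + p²r²b + p²q²c`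
and `φ(H₀) = φ({0,…,p-1} × {0,…,q-1} × {0,…,r-1}) ⊂ {0,…,N-1} ⊂ ℤ`. If the
exponential sum `∑_{h ∈ φ(H₀)} e^{-2πihξ/N}` vanishes, then `ξ ∈ ℤ`; i.e. the
Fourier transform of `1_{φ(H₀)}` on `ℝ/ℤ` has no zeros outside `(1/N)ℤ`. -/
theorem stmt_19 (p q r : ℕ) (hp : p.Prime) (hq : q.Prime) (hr : r.Prime)
    (hpodd : Odd p) (hqodd : Odd q) (hrodd : Odd r) (hpq : p < q) (hqr : q < r)
    (ξ : ℝ)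
    (hsum : ∑ h ∈ (Finset.range p ×ˢ Finset.range q ×ˢ Finset.range r).image
        (fun t : ℕ × ℕ × ℕ =>
          (q : ℤ)^2 * (r : ℤ)^2 * t.1 + (p : ℤ)^2 * (r : ℤ)^2 * t.2.1 +
            (p : ℤ)^2 * (q : ℤ)^2 * t.2.2),
      Complex.exp (-(2 * π * Complex.I) * (h : ℂ) * (ξ : ℂ) /
        ((p : ℂ)^2 * (q : ℂ)^2 * (r : ℂ)^2)) = 0) :
    ∃ k : ℤ, ξ = (k : ℝ) :=
  stmt_19_general p q r hp hq hr hpq hqr ξ hsum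
end
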